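/- Let K be a compact Hausdorff space and (K_α)_{α<ω₁} a family of pairwise disjoint clopen-like summands realized inside the one-point compactification K of the disjoint union ⊔_{α<ω₁} K_α. If for each α there is a probability measure μ_α on K_α with μ_α ∈ S_α(K_α) ∖ ⋃_{β<α} S_β(K_α), then the measures μ'_α on K defined by μ'_α(A) = μ_α(A ∩ K_α) satisfy μ'_α ∈ S_α(K) ∖ ⋃_{β<α} S_β(K) for every α < ω₁. In particular S_α(K) ∖ ⋃_{β<α} S_β(K) ≠ ∅ for every 1 ≤ α < ω₁, so the sequential closure of the finitely supported measures on K is not obtained in any countable number of steps. -/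

import Mathlib

open MeasureTheory Filter Set
open scoped ENNReal NNReal

/-!
Each `K_α` sits in the one-point compactification `K` as a compact open, hence clopen, set, so
`K` retracts continuously onto it (send the complement to any point of `K_α`). Push-forward
along a continuous map preserves every level `S_β` (by induction on `β`: finite supports go to
finite supports, and push-forward is weak* continuous). Now `μ'_α` is the push-forward of `μ_α`
along the inclusion and `μ_α` that of `μ'_α` along the retraction, so `μ_α` and `μ'_α` lie in
exactly the same levels.
-/

/-- The sequential closure hierarchy over the finitely supported probability
measures on points of `A`, in the weak* topology on probability measures. -/
noncomputable def SeqClos {K : Type*} [TopologicalSpace K] [MeasurableSpace K]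
    [OpensMeasurableSpace K] (A : Set K) : Ordinal.{0} → Set (ProbabilityMeasure K)
  | α =>
    if α = 0 then
      {μ | ∃ s : Finset K, ↑s ⊆ A ∧ μ (↑s : Set K) = 1}
    else
      {μ | ∃ f : ℕ → ProbabilityMeasure K,
        (∀ n, ∃ β : Ordinal.{0}, ∃ _ : β < α, f n ∈ SeqClos A β) ∧
          Tendsto f atTop (nhds μ)}
  termination_by α => α

theorem seqClos_zero {X : Type*} [TopologicalSpace X] [MeasurableSpace X]
    [OpensMeasurableSpace X] (A : Set X) :
    SeqClos A 0 = {μ | ∃ s : Finset X, ↑s ⊆ A ∧ μ (↑s : Set X) = 1} := by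
  rw [SeqClos, if_pos rfl]

theorem seqClos_of_ne_zero {X : Type*} [TopologicalSpace X] [MeasurableSpace X]
    [OpensMeasurableSpace X] (A : Set X) {α : Ordinal.{0}} (hα : α ≠ 0) :
    SeqClos A α = {μ | ∃ f : ℕ → ProbabilityMeasure X,
        (∀ n, ∃ β : Ordinal.{0}, ∃ _ : β < α, f n ∈ SeqClos A β) ∧
          Tendsto f atTop (nhds μ)} := by
  rw [SeqClos, if_neg hα]

theorem MeasureTheory.ProbabilityMeasure.map_image_eq_one {X Y : Type*} [MeasurableSpace X]
    [MeasurableSpace Y] (ν : ProbabilityMeasure X) {f : X → Y} (hf : AEMeasurable f ν)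
    {s : Set X} (hs : ν s = 1) : ν.map hf (f '' s) = 1 := by
  rw [← ENNReal.coe_inj, ProbabilityMeasure.ennreal_coeFn_eq_coeFn_toMeasure] at hs ⊢
  refine le_antisymm prob_le_one ?_
  calc (1 : ℝ≥0∞) = (ν : Measure X) s := by simpa using hs.symm
    _ ≤ _ := Measure.le_map_apply_image hf s

theorem map_mem_seqClos {X Y : Type*} [TopologicalSpace X] [MeasurableSpace X]
    [OpensMeasurableSpace X] [TopologicalSpace Y] [MeasurableSpace Y] [BorelSpace Y]
    {f : X → Y} (hf : Continuous f) {A : Set X} {B : Set Y} (hAB : MapsTo f A B)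
    (β : Ordinal.{0}) {ν : ProbabilityMeasure X} (hν : ν ∈ SeqClos A β) :
    ν.map hf.measurable.aemeasurable ∈ SeqClos B β := by
  classical
  induction β using WellFoundedLT.induction generalizing ν with
  | _ β IH =>
  rcases eq_or_ne β 0 with rfl | hβ
  · rw [seqClos_zero] at hν ⊢
    obtain ⟨s, hsA, hs⟩ := hν
    refine ⟨s.image f, ?_, ?_⟩
    · simpa using (hAB.mono_left hsA).image_subset
    · simpa using ν.map_image_eq_one hf.measurable.aemeasurable hs
  · rw [seqClos_of_ne_zero _ hβ] at hν ⊢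
    obtain ⟨g, hg, hlim⟩ := hν
    refine ⟨fun n => (g n).map hf.measurable.aemeasurable, fun n => ?_,
      ((ProbabilityMeasure.continuous_map hf).tendsto ν).comp hlim⟩
    obtain ⟨γ, hγ, hgn⟩ := hg n
    exact ⟨γ, hγ, IH γ hγ hgn⟩

theorem map_mem_seqClos_univ_iff_of_leftInverse {X Y : Type*} [TopologicalSpace X]
    [MeasurableSpace X] [BorelSpace X] [TopologicalSpace Y] [MeasurableSpace Y] [BorelSpace Y]
    {e : X → Y} {r : Y → X} (he : Continuous e) (hr : Continuous r)
    (hre : Function.LeftInverse r e) (β : Ordinal.{0}) (ν : ProbabilityMeasure X) :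
    ν.map he.measurable.aemeasurable ∈ SeqClos univ β ↔ ν ∈ SeqClos univ β := by
  refine ⟨fun h => ?_, map_mem_seqClos he (mapsTo_univ _ _) β⟩
  have hν : (ν.map he.measurable.aemeasurable).map hr.measurable.aemeasurable = ν := by
    apply ProbabilityMeasure.toMeasure_injective
    simp only [ProbabilityMeasure.toMeasure_map]
    rw [Measure.map_map hr.measurable he.measurable, hre.comp_eq_id, Measure.map_id]
  simpa [hν] using map_mem_seqClos hr (mapsTo_univ _ _) β h

theorem Topology.IsOpenEmbedding.exists_continuous_leftInverse {X Y : Type*}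
    [TopologicalSpace X] [TopologicalSpace Y] [Nonempty X] {e : X → Y}
    (he : IsOpenEmbedding e) (hc : IsClosed (range e)) :
    ∃ r : Y → X, Continuous r ∧ Function.LeftInverse r e := by
  classical
  refine ⟨(range e).piecewise (he.toOpenPartialHomeomorph e).symm
    (fun _ => Classical.arbitrary X), ?_, fun x => ?_⟩
  · refine continuous_piecewise ?_ ?_ continuousOn_const
    · simp [(IsClopen.frontier_eq ⟨hc, he.isOpen_range⟩)]
    · rw [hc.closure_eq]
      simpa using (he.toOpenPartialHomeomorph e).continuousOn_symm
  · simp [he.toOpenPartialHomeomorph_left_inv]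

theorem OnePoint.isOpenEmbedding_coe_sigmaMk {ι : Type*} {X : ι → Type*}
    [∀ i, TopologicalSpace (X i)] (i : ι) :
    Topology.IsOpenEmbedding (fun x : X i => ((⟨i, x⟩ : Σ j, X j) : OnePoint (Σ j, X j))) :=
  OnePoint.isOpenEmbedding_coe.comp .sigmaMk

theorem OnePoint.isClosed_range_coe_sigmaMk {ι : Type*} {X : ι → Type*}
    [∀ i, TopologicalSpace (X i)] (i : ι) [CompactSpace (X i)] :
    IsClosed (range fun x : X i => ((⟨i, x⟩ : Σ j, X j) : OnePoint (Σ j, X j))) := by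
  rw [range_comp', OnePoint.isClosed_image_coe]
  exact ⟨isClosed_range_sigmaMk, isCompact_range continuous_sigmaMk⟩

theorem stmt15_general
    (Kfam : {o : Ordinal.{0} // o < (Cardinal.aleph 1).ord} → Type)
    [∀ i, TopologicalSpace (Kfam i)] [∀ i, CompactSpace (Kfam i)]
    [∀ i, MeasurableSpace (Kfam i)] [∀ i, BorelSpace (Kfam i)]
    [MeasurableSpace (OnePoint (Σ j, Kfam j))] [BorelSpace (OnePoint (Σ j, Kfam j))]
    -- `μ i ∈ S_α(K_α) ∖ ⋃_{β<α} S_β(K_α)` where `α = i.1`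
    (μ : ∀ i, ProbabilityMeasure (Kfam i))
    (hμ : ∀ i, μ i ∈ SeqClos (univ : Set (Kfam i)) i.1 ∧
      ∀ β < i.1, μ i ∉ SeqClos (univ : Set (Kfam i)) β)
    -- `μ' i` is the trivial extension of `μ i` to the one-point compactification
    (μ' : ∀ i, ProbabilityMeasure (OnePoint (Σ j, Kfam j)))
    (hμ' : ∀ i, (μ' i : Measure (OnePoint (Σ j, Kfam j))) =
      Measure.map (fun x => (OnePoint.some ⟨i, x⟩)) (μ i : Measure (Kfam i))) :
    (∀ i : {o : Ordinal.{0} // o < (Cardinal.aleph 1).ord}, μ' i ∈ SeqClos (univ : Set (OnePoint (Σ j, Kfam j))) i.1 ∧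
      ∀ β < i.1, μ' i ∉ SeqClos (univ : Set (OnePoint (Σ j, Kfam j))) β) ∧
    (∀ i : {o : Ordinal.{0} // o < (Cardinal.aleph 1).ord}, (1 : Ordinal.{0}) ≤ i.1 →
      (SeqClos (univ : Set (OnePoint (Σ j, Kfam j))) i.1 \
        {ν | ∃ β < i.1, ν ∈ SeqClos (univ : Set (OnePoint (Σ j, Kfam j))) β}).Nonempty) := by
  have same_levels : ∀ i β, μ' i ∈ SeqClos univ β ↔ μ i ∈ SeqClos univ β := by
    intro i β
    have : Nonempty (Kfam i) := (μ i).nonempty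
    have he := OnePoint.isOpenEmbedding_coe_sigmaMk (X := Kfam) i
    obtain ⟨r, hr, hre⟩ :=
      he.exists_continuous_leftInverse (OnePoint.isClosed_range_coe_sigmaMk i)
    have hμ'_eq : μ' i = (μ i).map he.continuous.measurable.aemeasurable :=
      ProbabilityMeasure.toMeasure_injective (hμ' i)
    rw [hμ'_eq]
    exact map_mem_seqClos_univ_iff_of_leftInverse he.continuous hr hre β (μ i)
  have exact_level : ∀ i : {o : Ordinal.{0} // o < (Cardinal.aleph 1).ord},
      μ' i ∈ SeqClos univ i.1 ∧ ∀ β < i.1, μ' i ∉ SeqClos univ β := fun i => by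
    simpa only [same_levels] using hμ i
  refine ⟨exact_level, fun i _ => ⟨μ' i, (exact_level i).1, ?_⟩⟩
  rintro ⟨β, hβ, hβmem⟩
  exact (exact_level i).2 β hβ hβmem

theorem stmt15
    (Kfam : {o : Ordinal.{0} // o < (Cardinal.aleph 1).ord} → Type)
    [∀ i, TopologicalSpace (Kfam i)] [∀ i, CompactSpace (Kfam i)]
    [∀ i, T2Space (Kfam i)]
    [∀ i, MeasurableSpace (Kfam i)] [∀ i, BorelSpace (Kfam i)]
    [MeasurableSpace (OnePoint (Σ j, Kfam j))] [BorelSpace (OnePoint (Σ j, Kfam j))]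
    -- `μ i ∈ S_α(K_α) ∖ ⋃_{β<α} S_β(K_α)` where `α = i.1`
    (μ : ∀ i, ProbabilityMeasure (Kfam i))
    (hμ : ∀ i, μ i ∈ SeqClos (univ : Set (Kfam i)) i.1 ∧
      ∀ β < i.1, μ i ∉ SeqClos (univ : Set (Kfam i)) β)
    -- `μ' i` is the trivial extension of `μ i` to the one-point compactification
    (μ' : ∀ i, ProbabilityMeasure (OnePoint (Σ j, Kfam j)))
    (hμ' : ∀ i, (μ' i : Measure (OnePoint (Σ j, Kfam j))) =
      Measure.map (fun x => (OnePoint.some ⟨i, x⟩)) (μ i : Measure (Kfam i))) :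
    (∀ i : {o : Ordinal.{0} // o < (Cardinal.aleph 1).ord}, μ' i ∈ SeqClos (univ : Set (OnePoint (Σ j, Kfam j))) i.1 ∧
      ∀ β < i.1, μ' i ∉ SeqClos (univ : Set (OnePoint (Σ j, Kfam j))) β) ∧
    (∀ i : {o : Ordinal.{0} // o < (Cardinal.aleph 1).ord}, (1 : Ordinal.{0}) ≤ i.1 →
      (SeqClos (univ : Set (OnePoint (Σ j, Kfam j))) i.1 \
        {ν | ∃ β < i.1, ν ∈ SeqClos (univ : Set (OnePoint (Σ j, Kfam j))) β}).Nonempty) :=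
  stmt15_general Kfam μ hμ μ' hμ'
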